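/- arXiv:q-bio/0609027 — 3 statements merged into one kernel-verified Lean document; each statement's English description precedes it below -/
import Mathlib

section
/- For every real number a > 0, the section of the joint internal entropy production surface of the negative–negative interaction taken parallel to the ṠY-plane, k_a(y) = a(f(a) − g(y)) + y(f(y) − g(a)), attains its minimum over [0, ∞) at some point y_a lying strictly inside the interval (0, a); moreover any such minimizer satisfies the criticality equation f(y_a) − g(a) + y_a·f'(y_a) − a·g'(y_a) = 0. In particular y_a < a, i.e. system x is strictly ahead of system y with respect to thermodynamic equilibrium. -/
/-!
The derivative of `k_a` is `f y - g a + y f'(y) - a g'(y)`. At `y = 0` it equals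
`-g a - a g'(0) < 0`, while for `y ≥ a` it is at least `(f a - g a) + y (f' - g')(y) + (y - a) g'(y) > 0`,
since `f - g` and `g` are increasing. Hence `k_a` is nondecreasing on `[a, ∞)`, its minimum over
`[0, a]` (which exists by compactness) is a minimum over `[0, ∞)`, and the sign of the derivative
rules out both endpoints `0` and `a`. At an interior minimizer Fermat's theorem gives the
criticality equation.
-/

open Set

lemma MonotoneOn.deriv_nonneg_of_mem_Ici {φ : ℝ → ℝ} {x₀ y : ℝ} (hφ : MonotoneOn φ (Ici x₀))
    (hd : DifferentiableAt ℝ φ y) (hy : y ∈ Ici x₀) : 0 ≤ deriv φ y :=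
  hφ.derivWithin_nonneg.trans_eq (hd.derivWithin (uniqueDiffOn_Ici x₀ y hy))

lemma IsMinOn.nonneg_of_hasDerivAt_Ici {φ : ℝ → ℝ} {φ' x : ℝ} (hmin : IsMinOn φ (Ici x) x)
    (hd : HasDerivAt φ φ' x) : 0 ≤ φ' := by
  have hcone : (1 : ℝ) ∈ posTangentConeAt (Ici x) x :=
    mem_posTangentConeAt_of_segment_subset <| by
      rw [segment_eq_Icc (by linarith)]
      exact Icc_subset_Ici_self
  simpa using hmin.localize.hasFDerivWithinAt_nonneg hd.hasDerivWithinAt.hasFDerivWithinAt hcone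

def entropySection (f g : ℝ → ℝ) (a y : ℝ) : ℝ := a * (f a - g y) + y * (f y - g a)

section entropySection

variable {f g : ℝ → ℝ} {a y : ℝ}

lemma hasDerivAt_entropySection (hf : DifferentiableAt ℝ f y) (hg : DifferentiableAt ℝ g y) :
    HasDerivAt (entropySection f g a) (f y - g a + y * deriv f y - a * deriv g y) y := by
  have h := ((hg.hasDerivAt.const_sub (f a)).const_mul a).fun_add
    ((hasDerivAt_id' y).fun_mul (hf.hasDerivAt.sub_const (g a)))
  exact h.congr_deriv (by ring)

lemma deriv_entropySection_zero_neg (hg : Differentiable ℝ g) (hf0 : f 0 = 0) (hg0 : g 0 = 0)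
    (hgmono : StrictMonoOn g (Ici 0)) (ha : 0 < a) :
    f 0 - g a + 0 * deriv f 0 - a * deriv g 0 < 0 := by
  have hga : 0 < g a := hg0 ▸ hgmono self_mem_Ici ha.le ha
  have hg'0 : 0 ≤ deriv g 0 := hgmono.monotoneOn.deriv_nonneg_of_mem_Ici (hg 0) self_mem_Ici
  rw [hf0]
  nlinarith

lemma deriv_entropySection_pos_of_le (hf : Differentiable ℝ f) (hg : Differentiable ℝ g)
    (hf0 : f 0 = 0) (hg0 : g 0 = 0) (hfmono : StrictMonoOn f (Ici 0))
    (hgmono : StrictMonoOn g (Ici 0)) (hfg : StrictMonoOn (fun x => f x - g x) (Ici 0))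
    (ha : 0 < a) (hay : a ≤ y) :
    0 < f y - g a + y * deriv f y - a * deriv g y := by
  have hy : y ∈ Ici 0 := ha.le.trans hay
  have hfga : 0 < f a - g a := by
    simpa [hf0, hg0] using hfg self_mem_Ici ha.le ha
  have hfafy : f a ≤ f y := hfmono.monotoneOn ha.le hy hay
  have hg'y : 0 ≤ deriv g y := hgmono.monotoneOn.deriv_nonneg_of_mem_Ici (hg y) hy
  have hfg'y : 0 ≤ deriv f y - deriv g y := by
    have h := hfg.monotoneOn.deriv_nonneg_of_mem_Ici ((hf y).sub (hg y)) hy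
    rwa [deriv_fun_sub (hf y) (hg y)] at h
  nlinarith

lemma monotoneOn_entropySection (hf : Differentiable ℝ f) (hg : Differentiable ℝ g)
    (hf0 : f 0 = 0) (hg0 : g 0 = 0) (hfmono : StrictMonoOn f (Ici 0))
    (hgmono : StrictMonoOn g (Ici 0)) (hfg : StrictMonoOn (fun x => f x - g x) (Ici 0))
    (ha : 0 < a) : MonotoneOn (entropySection f g a) (Ici a) := by
  refine monotoneOn_of_hasDerivWithinAt_nonneg (convex_Ici a) ?_
    (fun y _ => (hasDerivAt_entropySection (hf y) (hg y)).hasDerivWithinAt) ?_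
  · exact fun y _ => (hasDerivAt_entropySection (hf y) (hg y)).continuousAt.continuousWithinAt
  · intro y hy
    rw [interior_Ici] at hy
    exact (deriv_entropySection_pos_of_le hf hg hf0 hg0 hfmono hgmono hfg ha hy.le).le

lemma exists_mem_Icc_isMinOn_entropySection (hf : Differentiable ℝ f) (hg : Differentiable ℝ g)
    (hf0 : f 0 = 0) (hg0 : g 0 = 0) (hfmono : StrictMonoOn f (Ici 0))
    (hgmono : StrictMonoOn g (Ici 0)) (hfg : StrictMonoOn (fun x => f x - g x) (Ici 0))
    (ha : 0 < a) : ∃ c ∈ Icc 0 a, IsMinOn (entropySection f g a) (Ici 0) c := by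
  have hcont : Continuous (entropySection f g a) :=
    continuous_iff_continuousAt.2 fun y => (hasDerivAt_entropySection (hf y) (hg y)).continuousAt
  obtain ⟨c, hc, hcmin⟩ := isCompact_Icc.exists_isMinOn (nonempty_Icc.2 ha.le) hcont.continuousOn
  refine ⟨c, hc, fun y (hy : 0 ≤ y) => ?_⟩
  rcases le_total y a with hya | hay
  · exact hcmin ⟨hy, hya⟩
  · exact (hcmin ⟨ha.le, le_rfl⟩).trans
      (monotoneOn_entropySection hf hg hf0 hg0 hfmono hgmono hfg ha self_mem_Ici hay hay)

lemma IsMinOn.deriv_entropySection_eq_zero (hf : Differentiable ℝ f) (hg : Differentiable ℝ g)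
    (hy : 0 < y) (hmin : IsMinOn (entropySection f g a) (Ici 0) y) :
    f y - g a + y * deriv f y - a * deriv g y = 0 :=
  (hmin.isLocalMin (Ici_mem_nhds hy)).hasDerivAt_eq_zero (hasDerivAt_entropySection (hf y) (hg y))

end entropySection

theorem nn_section_parallel_SY_min_general (f g : ℝ → ℝ)
    (hf : ContDiff ℝ 2 f) (hg : ContDiff ℝ 2 g)
    (hf0 : f 0 = 0) (hg0 : g 0 = 0)
    (hfmono : StrictMonoOn f (Set.Ici 0)) (hgmono : StrictMonoOn g (Set.Ici 0))
    (hfg : StrictMonoOn (fun x => f x - g x) (Set.Ici 0))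
    (a : ℝ) (ha : 0 < a) :
    (∃ ya ∈ Set.Ioo 0 a,
        IsMinOn (fun y => a * (f a - g y) + y * (f y - g a)) (Set.Ici 0) ya) ∧
      ∀ ya ∈ Set.Ioo 0 a,
        IsMinOn (fun y => a * (f a - g y) + y * (f y - g a)) (Set.Ici 0) ya →
          f ya - g a + ya * deriv f ya - a * deriv g ya = 0 := by
  have hfd : Differentiable ℝ f := hf.differentiable (by norm_num)
  have hgd : Differentiable ℝ g := hg.differentiable (by norm_num)
  refine ⟨?_, fun ya hya hmin => hmin.deriv_entropySection_eq_zero hfd hgd hya.1⟩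
  obtain ⟨c, ⟨hc0, hca⟩, hmin⟩ :=
    exists_mem_Icc_isMinOn_entropySection hfd hgd hf0 hg0 hfmono hgmono hfg ha
  have hc_ne_zero : c ≠ 0 := by
    rintro rfl
    exact (deriv_entropySection_zero_neg hgd hf0 hg0 hgmono ha).not_ge
      (hmin.nonneg_of_hasDerivAt_Ici (hasDerivAt_entropySection (hfd 0) (hgd 0)))
  have hc_ne_a : c ≠ a := by
    rintro rfl
    exact (deriv_entropySection_pos_of_le hfd hgd hf0 hg0 hfmono hgmono hfg ha le_rfl).ne'
      (hmin.deriv_entropySection_eq_zero hfd hgd ha)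
  exact ⟨c, ⟨hc0.lt_of_ne' hc_ne_zero, hca.lt_of_ne hc_ne_a⟩, hmin⟩

theorem nn_section_parallel_SY_min (f g : ℝ → ℝ)
    (hf : ContDiff ℝ 2 f) (hg : ContDiff ℝ 2 g)
    (hf0 : f 0 = 0) (hg0 : g 0 = 0)
    (hfmono : StrictMonoOn f (Set.Ici 0)) (hgmono : StrictMonoOn g (Set.Ici 0))
    (hfg : StrictMonoOn (fun x => f x - g x) (Set.Ici 0))
    (hfg' : MonotoneOn (fun x => deriv f x - deriv g x) (Set.Ici 0))
    (a : ℝ) (ha : 0 < a) :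
    (∃ ya ∈ Set.Ioo 0 a,
        IsMinOn (fun y => a * (f a - g y) + y * (f y - g a)) (Set.Ici 0) ya) ∧
      ∀ ya ∈ Set.Ioo 0 a,
        IsMinOn (fun y => a * (f a - g y) + y * (f y - g a)) (Set.Ici 0) ya →
          f ya - g a + ya * deriv f ya - a * deriv g ya = 0 :=
  nn_section_parallel_SY_min_general f g hf hg hf0 hg0 hfmono hgmono hfg a ha
end

section
/- Existence of a trajectory of minimum entropy T₂ for the positive–negative interaction: if x·g'(0) < g(x) for every x > 0, then for every a > 0 the section h_a(y) = a(f(a) + g(y)) + y(f(y) − g(a)) of the joint internal entropy production surface attains its minimum over [0, ∞) at some point y_a lying strictly inside (0, a), and any such minimizer satisfies f(y_a) − g(a) + y_a·f'(y_a) + a·g'(y_a) = 0. -/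
/-!
The section `h_a` is continuous, and on `[a, ∞)` it only grows, since there `g(y) ≥ g(a)` and
`f(y) - g(a) ≥ f(a) - g(a) > 0`; so it attains its minimum over `[0, ∞)` on `[0, a]`. The minimum
is not at `0`, because `h_a'(0) = a g'(0) - g(a) < 0`, and not at `a`, because
`h_a'(a) = f(a) - g(a) + a f'(a) + a g'(a) > 0` while an interior minimizer is a critical point.
-/

open Set Topology

/-- `Ṡ(x, y)`; the section `h_a` is `entropyProduction f g a`. -/
def entropyProduction (f g : ℝ → ℝ) (x y : ℝ) : ℝ :=
  x * (f x + g y) + y * (f y - g x)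

lemma IsLocalMinOn.hasDerivWithinAt_Ici_nonneg {F : ℝ → ℝ} {x d : ℝ}
    (hmin : IsLocalMinOn F (Ici x) x) (hF : HasDerivWithinAt F d (Ici x) x) : 0 ≤ d := by
  have hcone : (1 : ℝ) ∈ posTangentConeAt (Ici x) x :=
    mem_posTangentConeAt_of_segment_subset (by simp [segment_eq_Icc, Icc_subset_Ici_self])
  simpa using hmin.hasFDerivWithinAt_nonneg hF.hasFDerivWithinAt hcone

lemma exists_isMinOn_Ici_mem_Icc {F : ℝ → ℝ} {l r : ℝ} (hlr : l ≤ r)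
    (hF : ContinuousOn F (Icc l r)) (htail : ∀ y, r ≤ y → F r ≤ F y) :
    ∃ c ∈ Icc l r, IsMinOn F (Ici l) c := by
  obtain ⟨c, hc, hmin⟩ := isCompact_Icc.exists_isMinOn (nonempty_Icc.2 hlr) hF
  refine ⟨c, hc, fun y (hy : l ≤ y) => ?_⟩
  rcases le_total y r with hyr | hry
  · exact hmin ⟨hy, hyr⟩
  · exact (hmin (right_mem_Icc.2 hlr)).trans (htail y hry)

lemma MonotoneOn.deriv_nonneg_of_mem_nhds {F : ℝ → ℝ} {s : Set ℝ} {x : ℝ}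
    (hF : MonotoneOn F s) (hs : s ∈ 𝓝 x) : 0 ≤ deriv F x := by
  rw [← derivWithin_of_mem_nhds hs]
  exact hF.derivWithin_nonneg

section EntropyProduction

variable {f g : ℝ → ℝ} {a y : ℝ}

lemma continuous_entropyProduction (hf : Continuous f) (hg : Continuous g) :
    Continuous (entropyProduction f g a) := by
  unfold entropyProduction
  fun_prop

lemma hasDerivAt_entropyProduction (hf : DifferentiableAt ℝ f y) (hg : DifferentiableAt ℝ g y) :
    HasDerivAt (entropyProduction f g a)
      (f y - g a + y * deriv f y + a * deriv g y) y := by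
  have hsum : HasDerivAt (fun y => a * (f a + g y) + y * (f y - g a))
      (a * deriv g y + (1 * (f y - g a) + y * deriv f y)) y :=
    ((hg.hasDerivAt.const_add (f a)).const_mul a).add
      ((hasDerivAt_id' y).mul (hf.hasDerivAt.sub_const (g a)))
  exact hsum.congr_deriv (by ring)

lemma entropyProduction_self_le (hf : MonotoneOn f (Ici 0)) (hg : MonotoneOn g (Ici 0))
    (ha : 0 ≤ a) (hgf : g a ≤ f a) (hay : a ≤ y) :
    entropyProduction f g a a ≤ entropyProduction f g a y := by
  have hy : 0 ≤ y := ha.trans hay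
  have hgy : g a ≤ g y := hg ha hy hay
  have hfy : f a ≤ f y := hf ha hy hay
  unfold entropyProduction
  linarith [mul_le_mul_of_nonneg_left hgy ha, mul_le_mul_of_nonneg_left hfy hy,
    mul_le_mul_of_nonneg_right hay (sub_nonneg.2 hgf)]

end EntropyProduction

theorem pn_T2_exists_general (f g : ℝ → ℝ)
    (hf : ContDiff ℝ 2 f) (hg : ContDiff ℝ 2 g)
    (hf0 : f 0 = 0) (hg0 : g 0 = 0)
    (hfmono : StrictMonoOn f (Set.Ici 0)) (hgmono : StrictMonoOn g (Set.Ici 0))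
    (hfg : StrictMonoOn (fun x => f x - g x) (Set.Ici 0))
    (hg2 : ∀ x : ℝ, 0 < x → x * deriv g 0 < g x)
    (a : ℝ) (ha : 0 < a) :
    (∃ ya ∈ Set.Ioo 0 a,
        IsMinOn (fun y => a * (f a + g y) + y * (f y - g a)) (Set.Ici 0) ya) ∧
      ∀ ya ∈ Set.Ioo 0 a,
        IsMinOn (fun y => a * (f a + g y) + y * (f y - g a)) (Set.Ici 0) ya →
          f ya - g a + ya * deriv f ya + a * deriv g ya = 0 := by
  have hfd : Differentiable ℝ f := hf.differentiable (by norm_num)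
  have hgd : Differentiable ℝ g := hg.differentiable (by norm_num)
  have hder (y : ℝ) := hasDerivAt_entropyProduction (a := a) (hfd y) (hgd y)
  have hcrit : ∀ y, 0 < y → IsMinOn (entropyProduction f g a) (Ici 0) y →
      f y - g a + y * deriv f y + a * deriv g y = 0 := fun y hy hmin =>
    (hmin.isLocalMin (Ici_mem_nhds hy)).hasDerivAt_eq_zero (hder y)
  have hgf : g a < f a := by simpa [hf0, hg0] using hfg self_mem_Ici ha.le ha
  obtain ⟨c, hc, hmin⟩ := exists_isMinOn_Ici_mem_Icc ha.le
    (continuous_entropyProduction hfd.continuous hgd.continuous).continuousOn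
    fun y hy => entropyProduction_self_le hfmono.monotoneOn hgmono.monotoneOn ha.le hgf.le hy
  have hc0 : c ≠ 0 := by
    rintro rfl
    have := hmin.localize.hasDerivWithinAt_Ici_nonneg (hder 0).hasDerivWithinAt
    linarith [hg2 a ha, hf0]
  have hca : c ≠ a := by
    rintro rfl
    have hf' := hfmono.monotoneOn.deriv_nonneg_of_mem_nhds (Ici_mem_nhds ha)
    have hg' := hgmono.monotoneOn.deriv_nonneg_of_mem_nhds (Ici_mem_nhds ha)
    linarith [hcrit c ha hmin, mul_nonneg ha.le hf', mul_nonneg ha.le hg']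
  exact ⟨⟨c, ⟨hc.1.lt_of_ne' hc0, hc.2.lt_of_ne hca⟩, hmin⟩, fun y hy => hcrit y hy.1⟩

theorem pn_T2_exists (f g : ℝ → ℝ)
    (hf : ContDiff ℝ 2 f) (hg : ContDiff ℝ 2 g)
    (hf0 : f 0 = 0) (hg0 : g 0 = 0)
    (hfmono : StrictMonoOn f (Set.Ici 0)) (hgmono : StrictMonoOn g (Set.Ici 0))
    (hfg : StrictMonoOn (fun x => f x - g x) (Set.Ici 0))
    (hfg' : MonotoneOn (fun x => deriv f x - deriv g x) (Set.Ici 0))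
    (hg2 : ∀ x : ℝ, 0 < x → x * deriv g 0 < g x)
    (a : ℝ) (ha : 0 < a) :
    (∃ ya ∈ Set.Ioo 0 a,
        IsMinOn (fun y => a * (f a + g y) + y * (f y - g a)) (Set.Ici 0) ya) ∧
      ∀ ya ∈ Set.Ioo 0 a,
        IsMinOn (fun y => a * (f a + g y) + y * (f y - g a)) (Set.Ici 0) ya →
          f ya - g a + ya * deriv f ya + a * deriv g ya = 0 :=
  pn_T2_exists_general f g hf hg hf0 hg0 hfmono hgmono hfg hg2 a ha
end

section
/- For every real number c > 0, the second derivative at x = c/2 of the section h(x) = x(f(x) + g(c − x)) + (c − x)(f(c − x) + g(x)) of the positive–positive interaction surface by the plane y = c − x equals h''(c/2) = 4(f'(c/2) − g'(c/2)) + c(f''(c/2) + g''(c/2)); consequently, if 2(f'(c/2) − g'(c/2)) + (c/2)(f''(c/2) + g''(c/2)) > 0, then x = c/2 is a strict local minimum of this section, so that the bisector y = x is the only possible trajectory of minimum entropy of the positive–positive interaction. -/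
/-! The section splits as `h x = k x + k (c - x)` with `k x = x * (f x + g (c - x))`. Hence
`h' x = k' x - k' (c - x)` vanishes at `c / 2` and `h'' (c / 2) = 2 k'' (c / 2)`, which the
product rule evaluates. If this is positive, `h` is strictly convex near `c / 2` by continuity of
`h''`, and a strictly convex function lies strictly above its horizontal tangent. -/

theorem deriv_add_comp_const_sub {k l : ℝ → ℝ} (hk : Differentiable ℝ k)
    (hl : Differentiable ℝ l) (c : ℝ) :
    deriv (fun x => k x + l (c - x)) = fun x => deriv k x - deriv l (c - x) := by
  funext x
  rw [deriv_fun_add (hk x) (differentiableAt_comp_const_sub.mpr (hl (c - x))),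
    deriv_comp_const_sub]
  ring

theorem deriv_deriv_add_comp_const_sub {k l : ℝ → ℝ} (hk : ContDiff ℝ 2 k)
    (hl : ContDiff ℝ 2 l) (c : ℝ) :
    deriv (deriv fun x => k x + l (c - x)) =
      fun x => deriv (deriv k) x + deriv (deriv l) (c - x) := by
  rw [deriv_add_comp_const_sub (hk.differentiable two_ne_zero) (hl.differentiable two_ne_zero)]
  funext x
  rw [deriv_fun_sub (hk.differentiable_deriv_two x)
    (differentiableAt_comp_const_sub.mpr (hl.differentiable_deriv_two (c - x))),
    deriv_comp_const_sub, sub_neg_eq_add]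

theorem deriv_deriv_id_mul {u : ℝ → ℝ} (hu : ContDiff ℝ 2 u) (x : ℝ) :
    deriv (deriv fun y => y * u y) x = 2 * deriv u x + x * deriv (deriv u) x := by
  have hu₁ : Differentiable ℝ u := hu.differentiable two_ne_zero
  have hu₂ : Differentiable ℝ (deriv u) := hu.differentiable_deriv_two
  have hd : deriv (fun y => y * u y) = fun y => u y + y * deriv u y := by
    funext y
    rw [((hasDerivAt_id' y).fun_mul (hu₁ y).hasDerivAt).deriv, one_mul]
  rw [hd, ((hu₁ x).hasDerivAt.fun_add ((hasDerivAt_id' x).fun_mul (hu₂ x).hasDerivAt)).deriv]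
  ring

theorem exists_lt_of_deriv_eq_zero_of_deriv_deriv_pos {φ : ℝ → ℝ} {x₀ : ℝ}
    (hφ : ContDiff ℝ 2 φ) (hd : deriv φ x₀ = 0) (hdd : 0 < deriv (deriv φ) x₀) :
    ∃ ε > 0, ∀ x, |x - x₀| < ε → x ≠ x₀ → φ x₀ < φ x := by
  have hcont : Continuous (deriv (deriv φ)) := (hφ.iterate_deriv' 0 2).continuous
  obtain ⟨ε, hε, hball⟩ := Metric.isOpen_iff.mp (isOpen_lt continuous_const hcont) x₀ hdd
  have hconv : StrictConvexOn ℝ (Metric.ball x₀ ε) φ :=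
    strictConvexOn_of_deriv2_pos' (convex_ball x₀ ε) hφ.continuous.continuousOn
      fun x hx => hball hx
  have hdiff : DifferentiableAt ℝ φ x₀ := hφ.differentiable two_ne_zero x₀
  refine ⟨ε, hε, fun x hx hne => ?_⟩
  have hx : x ∈ Metric.ball x₀ ε := by rwa [Metric.mem_ball, Real.dist_eq]
  have h₀ : x₀ ∈ Metric.ball x₀ ε := Metric.mem_ball_self hε
  rcases hne.lt_or_gt with hlt | hlt
  · have hslope := hconv.slope_lt_deriv hx h₀ hlt hdiff
    rw [hd, slope_def_field, div_lt_iff₀ (sub_pos.2 hlt)] at hslope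
    linarith
  · have hslope := hconv.deriv_lt_slope h₀ hx hlt hdiff
    rw [hd, slope_def_field, lt_div_iff₀ (sub_pos.2 hlt)] at hslope
    linarith

theorem pp_transversal_second_deriv_general (f g : ℝ → ℝ)
    (hf : ContDiff ℝ 2 f) (hg : ContDiff ℝ 2 g)
    (c : ℝ) :
    deriv (deriv (fun x => x * (f x + g (c - x)) + (c - x) * (f (c - x) + g x))) (c / 2) =
        4 * (deriv f (c / 2) - deriv g (c / 2)) +
          c * (deriv (deriv f) (c / 2) + deriv (deriv g) (c / 2)) ∧
      (0 < 2 * (deriv f (c / 2) - deriv g (c / 2)) +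
          c / 2 * (deriv (deriv f) (c / 2) + deriv (deriv g) (c / 2)) →
        ∃ ε > 0, ∀ x : ℝ, |x - c / 2| < ε → x ≠ c / 2 →
          (fun x => x * (f x + g (c - x)) + (c - x) * (f (c - x) + g x)) (c / 2) <
            (fun x => x * (f x + g (c - x)) + (c - x) * (f (c - x) + g x)) x) := by
  set u : ℝ → ℝ := fun y => f y + g (c - y)
  set k : ℝ → ℝ := fun y => y * u y
  have hu : ContDiff ℝ 2 u := by fun_prop
  have hk : ContDiff ℝ 2 k := by fun_prop
  have hh : ContDiff ℝ 2 fun x => k x + k (c - x) := by fun_prop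
  have hsection : (fun x => x * (f x + g (c - x)) + (c - x) * (f (c - x) + g x)) =
      fun x => k x + k (c - x) := by
    funext x
    simp only [k, u, sub_sub_cancel]
  have hk'' : deriv (deriv k) (c / 2) = 2 * (deriv f (c / 2) - deriv g (c / 2)) +
      c / 2 * (deriv (deriv f) (c / 2) + deriv (deriv g) (c / 2)) := by
    rw [deriv_deriv_id_mul hu, deriv_deriv_add_comp_const_sub hf hg,
      deriv_add_comp_const_sub (hf.differentiable two_ne_zero) (hg.differentiable two_ne_zero)]
    simp only [sub_half]
  have hh'' : deriv (deriv fun x => k x + k (c - x)) (c / 2) = 2 * deriv (deriv k) (c / 2) := by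
    rw [deriv_deriv_add_comp_const_sub hk hk]
    simp only [sub_half, two_mul]
  have hh' : deriv (fun x => k x + k (c - x)) (c / 2) = 0 := by
    rw [deriv_add_comp_const_sub (hk.differentiable two_ne_zero) (hk.differentiable two_ne_zero)]
    simp only [sub_half, sub_self]
  rw [hsection, hh'', hk'']
  exact ⟨by ring, fun hpos =>
    exists_lt_of_deriv_eq_zero_of_deriv_deriv_pos hh hh' (by rw [hh'', hk'']; linarith)⟩

theorem pp_transversal_second_deriv (f g : ℝ → ℝ)
    (hf : ContDiff ℝ 2 f) (hg : ContDiff ℝ 2 g)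
    (hf0 : f 0 = 0) (hg0 : g 0 = 0)
    (hfmono : StrictMonoOn f (Set.Ici 0)) (hgmono : StrictMonoOn g (Set.Ici 0))
    (hfg : StrictMonoOn (fun x => f x - g x) (Set.Ici 0))
    (hfg' : MonotoneOn (fun x => deriv f x - deriv g x) (Set.Ici 0))
    (c : ℝ) (hc : 0 < c) :
    deriv (deriv (fun x => x * (f x + g (c - x)) + (c - x) * (f (c - x) + g x))) (c / 2) =
        4 * (deriv f (c / 2) - deriv g (c / 2)) +
          c * (deriv (deriv f) (c / 2) + deriv (deriv g) (c / 2)) ∧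
      (0 < 2 * (deriv f (c / 2) - deriv g (c / 2)) +
          c / 2 * (deriv (deriv f) (c / 2) + deriv (deriv g) (c / 2)) →
        ∃ ε > 0, ∀ x : ℝ, |x - c / 2| < ε → x ≠ c / 2 →
          (fun x => x * (f x + g (c - x)) + (c - x) * (f (c - x) + g x)) (c / 2) <
            (fun x => x * (f x + g (c - x)) + (c - x) * (f (c - x) + g x)) x) :=
  pp_transversal_second_deriv_general f g hf hg c
end
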